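/- (Corollary Oleinik, Hopf–Lax form.) Let J be a nonempty closed interval of ℝ and let u_T : ℝ → ℝ be bounded, left continuous, with values in J. Then u_T satisfies the Oleinik condition (O) at T if and only if there exists a Lipschitz function U_o : ℝ → ℝ with U_o'(x) ∈ J for a.e. x such that S_T U_o = U_T, i.e. for every x ∈ ℝ, inf_{ξ ∈ ℝ} [U_o(ξ) + T·f*((x − ξ)/T)] = U_T(x). -/

import Mathlib

open Filter MeasureTheory

/-- Condition (f): `f` is `C²`, strongly convex (`f'' > 0` everywhere), and
`f' → ∓∞` at `∓∞`. -/
def CondF (f : ℝ → ℝ) : Prop :=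
  ContDiff ℝ 2 f ∧ (∀ x, 0 < deriv (deriv f) x) ∧
    Tendsto (deriv f) atBot atBot ∧ Tendsto (deriv f) atTop atTop

/-- The Legendre transform `f*(y) = sup_x (y·x − f(x))`. -/
noncomputable def legendre (f : ℝ → ℝ) (y : ℝ) : ℝ :=
  sSup (Set.range fun x => y * x - f x)

/-- `U_T(x) = ∫_{x̌}^x u_T`. -/
noncomputable def UT (uT : ℝ → ℝ) (xc x : ℝ) : ℝ := ∫ ξ in xc..x, uT ξ

/-- `U_o^♭(x) = sup_ξ [U_T(ξ) − T f*((ξ−x)/T)]`. -/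
noncomputable def Uflat (f : ℝ → ℝ) (T : ℝ) (uT : ℝ → ℝ) (xc x : ℝ) : ℝ :=
  sSup (Set.range fun ξ => UT uT xc ξ - T * legendre f ((ξ - x) / T))

/-- `M(x)`: the set of maximizers in the definition of `U_o^♭(x)`. -/
def MSet (f : ℝ → ℝ) (T : ℝ) (uT : ℝ → ℝ) (xc x : ℝ) : Set ℝ :=
  {ξ | UT uT xc ξ = Uflat f T uT xc x + T * legendre f ((ξ - x) / T)}

/-- Oleinik condition (O) at `T`. -/
def Oleinik (f : ℝ → ℝ) (T : ℝ) (uT : ℝ → ℝ) : Prop :=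
  ∀ x Δ : ℝ, 0 < Δ → deriv f (uT (x + Δ)) - deriv f (uT x) ≤ Δ / T

/-- The Hopf–Lax operator at time `T`: `(S_T U)(x) = inf_ξ [U(ξ) + T f*((x−ξ)/T)]`. -/
noncomputable def HopfLax (f : ℝ → ℝ) (T : ℝ) (U : ℝ → ℝ) (x : ℝ) : ℝ :=
  sInf (Set.range fun ξ => U ξ + T * legendre f ((x - ξ) / T))

/-- Left continuity of a real function. -/
def LeftCts (u : ℝ → ℝ) : Prop :=
  ∀ x, Tendsto u (nhdsWithin x (Set.Iio x)) (nhds (u x))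

/-- `II_T(U_T; J)`: Lipschitz functions with a.e. derivative in `J` evolving into `U_T`
under the Hopf–Lax semigroup. -/
def IIT (f : ℝ → ℝ) (T : ℝ) (uT : ℝ → ℝ) (xc : ℝ) (J : Set ℝ) : Set (ℝ → ℝ) :=
  {U | (∃ K, LipschitzWith K U) ∧ (∀ᵐ x ∂volume, deriv U x ∈ J) ∧
    ∀ x, HopfLax f T U x = UT uT xc x}

/-- `U_o^♯(x) = sup { U(x) : U ∈ II_T(U_T; J) }`. -/
noncomputable def Usharp (f : ℝ → ℝ) (T : ℝ) (uT : ℝ → ℝ) (xc : ℝ) (J : Set ℝ) (x : ℝ) : ℝ :=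
  sSup ((fun U : ℝ → ℝ => U x) '' IIT f T uT xc J)

/-!
Under (f), `f'` is an order automorphism of `ℝ`, `f*` is differentiable with `(f*)' = (f')⁻¹`, and
the cost `z ↦ T f*(z/T)` is strictly convex and superlinear.

If (O) holds, take `U_o := U_o^♭`. Translating competitors shows that the slopes of `U_o^♭` lie
between `inf u_T` and `sup u_T`, so `U_o^♭` is Lipschitz with derivative in `J`; and at
`ξ = x - T f'(u_T(x))`, condition (O) makes `ξ` realise `S_T U_o^♭(x) = U_T(x)`.

Conversely, if `S_T U_o = U_T`, the infimum defining `S_T U_o(x)` is attained at some `ξ(x)`,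
nondecreasing in `x` by strict convexity of the cost. Since `u_T` is left continuous, `u_T(x)` is
the left derivative of `U_T`, and comparing it with the cost gives
`(x - ξ(x))/T ≤ f'(u_T(x))` and `f'(u_T(y)) ≤ (y - ξ(x))/T` for `x < y`, whence (O).
-/
open Set

theorem ConvexOn.add_deriv_mul_sub_le {φ : ℝ → ℝ} (hφ : ConvexOn ℝ univ φ)
    (hd : Differentiable ℝ φ) (x y : ℝ) : φ x + deriv φ x * (y - x) ≤ φ y := by
  rcases lt_trichotomy x y with hxy | rfl | hxy
  · have := hφ.deriv_le_slope (mem_univ x) (mem_univ y) hxy (hd x)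
    rw [slope_def_field, le_div_iff₀ (sub_pos.2 hxy)] at this
    linarith
  · simp
  · have := hφ.slope_le_deriv (mem_univ y) (mem_univ x) hxy (hd x)
    rw [slope_def_field, div_le_iff₀ (sub_pos.2 hxy)] at this
    linarith

theorem StrictConvexOn.add_lt_add_of_lt {φ : ℝ → ℝ} (hφ : StrictConvexOn ℝ univ φ)
    {a b c d : ℝ} (hab : a < b) (hac : a < c) (hsum : a + d = b + c) :
    φ b + φ c < φ a + φ d := by
  have had : 0 < d - a := by linarith
  set θ := (d - b) / (d - a)
  have hθ : 0 < θ := div_pos (by linarith) had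
  have hθ' : 0 < 1 - θ := by
    rw [sub_pos, div_lt_one had]; linarith
  have hb := hφ.2 (mem_univ a) (mem_univ d) (by linarith) hθ hθ' (by ring)
  have hc := hφ.2 (mem_univ a) (mem_univ d) (by linarith) hθ' hθ (by ring)
  have eb : θ • a + (1 - θ) • d = b := by
    simp only [smul_eq_mul, θ]; field_simp; ring
  have ec : (1 - θ) • a + θ • d = c := by
    simp only [smul_eq_mul, θ]; field_simp; linear_combination (d - a) * hsum
  rw [eb] at hb
  rw [ec] at hc
  simp only [smul_eq_mul] at hb hc
  linarith

theorem IsLocalMinOn.hasDerivWithinAt_Iic_nonpos {φ : ℝ → ℝ} {a d : ℝ}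
    (hmin : IsLocalMinOn φ (Iic a) a) (hφ : HasDerivWithinAt φ d (Iic a) a) : d ≤ 0 := by
  have hdir : (a - 1) - a ∈ posTangentConeAt (Iic a) a :=
    sub_mem_posTangentConeAt_of_segment_subset
      ((convex_Iic a).segment_subset self_mem_Iic (by simp))
  have := hmin.hasFDerivWithinAt_nonneg hφ.hasFDerivWithinAt hdir
  simp at this
  linarith

namespace CondF

variable {f : ℝ → ℝ} (hf : CondF f)
include hf

theorem differentiable : Differentiable ℝ f := hf.1.differentiable (by norm_num)

theorem hasDerivAt_deriv (x : ℝ) : HasDerivAt (deriv f) (deriv (deriv f) x) x := by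
  have h2 : ContDiff ℝ 1 (deriv f) := (contDiff_succ_iff_deriv.1 hf.1).2.2
  exact (h2.differentiable one_ne_zero x).hasDerivAt

theorem strictMono_deriv : StrictMono (deriv f) := strictMono_of_deriv_pos hf.2.1

theorem convexOn : ConvexOn ℝ univ f :=
  hf.strictMono_deriv.monotone.convexOn_univ_of_deriv hf.differentiable

noncomputable def derivIso : ℝ ≃o ℝ :=
  StrictMono.orderIsoOfSurjective (deriv f) hf.strictMono_deriv
    ((hf.1.continuous_deriv (by norm_num)).surjective hf.2.2.2 hf.2.2.1)

@[simp]
theorem coe_derivIso : ⇑hf.derivIso = deriv f := rfl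

@[simp]
theorem deriv_derivIso_symm (p : ℝ) : deriv f (hf.derivIso.symm p) = p :=
  hf.derivIso.apply_symm_apply p

@[simp]
theorem derivIso_symm_deriv (x : ℝ) : hf.derivIso.symm (deriv f x) = x :=
  hf.derivIso.symm_apply_apply x

theorem isGreatest_range_deriv_mul_sub (x : ℝ) :
    IsGreatest (range fun w => deriv f x * w - f w) (deriv f x * x - f x) :=
  ⟨⟨x, rfl⟩, forall_mem_range.2 fun w => by
    have := hf.convexOn.add_deriv_mul_sub_le hf.differentiable x w
    linarith⟩

theorem legendre_deriv (x : ℝ) : legendre f (deriv f x) = deriv f x * x - f x :=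
  (hf.isGreatest_range_deriv_mul_sub x).csSup_eq

theorem legendre_eq (p : ℝ) :
    legendre f p = p * hf.derivIso.symm p - f (hf.derivIso.symm p) := by
  simpa using hf.legendre_deriv (hf.derivIso.symm p)

theorem mul_sub_le_legendre (p w : ℝ) : p * w - f w ≤ legendre f p := by
  obtain ⟨x, rfl⟩ := hf.derivIso.surjective p
  rw [coe_derivIso, hf.legendre_deriv]
  exact (hf.isGreatest_range_deriv_mul_sub x).2 ⟨w, rfl⟩

/-- The inverse function theorem for `f'`, whose derivative `f''` never vanishes, makes `f*`
differentiable; the terms in `(f'⁻¹)'` then cancel. -/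
theorem hasDerivAt_legendre (p : ℝ) : HasDerivAt (legendre f) (hf.derivIso.symm p) p := by
  set g := hf.derivIso.symm
  have hg : HasDerivAt g (deriv (deriv f) (g p))⁻¹ p :=
    (hf.hasDerivAt_deriv (g p)).of_local_left_inverse g.continuous.continuousAt
      (hf.2.1 _).ne' (Eventually.of_forall hf.deriv_derivIso_symm)
  have := ((hasDerivAt_id p).mul hg).sub ((hf.differentiable (g p)).hasDerivAt.comp p hg)
  rw [show legendre f = id * ⇑g - f ∘ ⇑g from funext hf.legendre_eq]
  refine this.congr_deriv ?_
  rw [hf.deriv_derivIso_symm]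
  simp only [id]
  ring

theorem mul_abs_sub_le_legendre (c z : ℝ) : c * |z| - max (f c) (f (-c)) ≤ legendre f z := by
  have h₁ := hf.mul_sub_le_legendre z c
  have h₂ := hf.mul_sub_le_legendre z (-c)
  rcases abs_cases z with ⟨h, _⟩ | ⟨h, _⟩ <;> rw [h] <;>
    linarith [le_max_left (f c) (f (-c)), le_max_right (f c) (f (-c))]

variable {T : ℝ} (hT : 0 < T)
include hT

theorem hasDerivAt_cost (z : ℝ) :
    HasDerivAt (fun z => T * legendre f (z / T)) (hf.derivIso.symm (z / T)) z := by
  have := ((hf.hasDerivAt_legendre (z / T)).comp z ((hasDerivAt_id z).div_const T)).const_mul T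
  exact this.congr_deriv (by field_simp)

theorem strictConvexOn_cost : StrictConvexOn ℝ univ fun z => T * legendre f (z / T) := by
  refine StrictMono.strictConvexOn_univ_of_deriv
    (continuous_iff_continuousAt.2 fun z => (hf.hasDerivAt_cost hT z).continuousAt) ?_
  rw [funext fun z => (hf.hasDerivAt_cost hT z).deriv]
  exact hf.derivIso.symm.strictMono.comp fun a b hab => div_lt_div_of_pos_right hab hT

theorem cost_sub_cost_le (a b : ℝ) :
    T * legendre f (b / T) - T * legendre f (a / T) ≤ (b - a) * hf.derivIso.symm (b / T) := by
  have := (hf.strictConvexOn_cost hT).convexOn.add_deriv_mul_sub_le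
    (fun z => (hf.hasDerivAt_cost hT z).differentiableAt) b a
  rw [(hf.hasDerivAt_cost hT b).deriv] at this
  linarith

theorem mul_abs_sub_le_cost (c z : ℝ) :
    c * |z| - T * max (f c) (f (-c)) ≤ T * legendre f (z / T) := by
  have := mul_le_mul_of_nonneg_left (hf.mul_abs_sub_le_legendre c (z / T)) hT.le
  rw [abs_div, abs_of_pos hT] at this
  have e : T * (c * (|z| / T) - max (f c) (f (-c))) = c * |z| - T * max (f c) (f (-c)) := by
    field_simp
  linarith

theorem integral_derivIso_symm (c a b : ℝ) :
    ∫ s in a..b, hf.derivIso.symm ((s - c) / T) =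
      T * legendre f ((b - c) / T) - T * legendre f ((a - c) / T) :=
  intervalIntegral.integral_eq_sub_of_hasDerivAt
    (fun s _ => (hf.hasDerivAt_cost hT (s - c)).comp_sub_const s c)
    ((hf.derivIso.symm.continuous.comp (by fun_prop)).intervalIntegrable a b)

end CondF

theorem le_of_sub_eq_integral {Φ φ : ℝ → ℝ} {x : ℝ}
    (hΦ : ∀ a b, Φ b - Φ a = ∫ s in a..b, φ s) (hφ : ∀ a b, IntervalIntegrable φ volume a b)
    (hleft : ∀ s ≤ x, 0 ≤ φ s) (hright : ∀ s, x ≤ s → φ s ≤ 0) (y : ℝ) : Φ y ≤ Φ x := by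
  rcases le_total x y with hxy | hyx
  · have := intervalIntegral.integral_mono_on hxy (hφ x y) intervalIntegrable_const
      fun s hs => hright s hs.1
    rw [intervalIntegral.integral_zero] at this
    linarith [hΦ x y]
  · have := intervalIntegral.integral_nonneg (μ := volume) hyx fun s hs => hleft s hs.2
    linarith [hΦ y x]

def HasSlopesIn (g : ℝ → ℝ) (A B : ℝ) : Prop :=
  ∀ ⦃x y⦄, x ≤ y → A * (y - x) ≤ g y - g x ∧ g y - g x ≤ B * (y - x)

namespace HasSlopesIn

variable {g : ℝ → ℝ} {A B : ℝ}

theorem sub_le_mul_abs {C : ℝ} (h : HasSlopesIn g (-C) C) (x y : ℝ) :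
    g y - g x ≤ C * |y - x| := by
  rcases le_total x y with hxy | hyx
  · rw [abs_of_nonneg (sub_nonneg.2 hxy)]
    exact (h hxy).2
  · rw [abs_of_nonpos (sub_nonpos.2 hyx)]
    linarith [(h hyx).1]

theorem lipschitzWith {C : ℝ} (h : HasSlopesIn g (-C) C) : LipschitzWith C.toNNReal g :=
  LipschitzWith.of_le_add_mul' C fun x y => by
    rw [Real.dist_eq]
    linarith [h.sub_le_mul_abs y x]

theorem deriv_mem_Icc (h : HasSlopesIn g A B) {x : ℝ} (hd : DifferentiableAt ℝ g x) :
    deriv g x ∈ Icc A B := by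
  have hlow : Monotone fun y => g y - A * y := fun a b hab => by linarith [(h hab).1]
  have hupp : Monotone fun y => B * y - g y := fun a b hab => by linarith [(h hab).2]
  have dlow : HasDerivAt (fun y => g y - A * y) (deriv g x - A) x :=
    (hd.hasDerivAt.sub ((hasDerivAt_id x).const_mul A)).congr_deriv (by simp)
  have dupp : HasDerivAt (fun y => B * y - g y) (B - deriv g x) x :=
    (((hasDerivAt_id x).const_mul B).sub hd.hasDerivAt).congr_deriv (by simp)
  have := dlow.deriv ▸ hlow.deriv_nonneg (x := x)
  have := dupp.deriv ▸ hupp.deriv_nonneg (x := x)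
  constructor <;> linarith

end HasSlopesIn

section UT

variable {u : ℝ → ℝ} (hu : Measurable u) {C : ℝ} (hC : ∀ x, |u x| ≤ C)
include hu hC

theorem intervalIntegrable_of_abs_le (a b : ℝ) : IntervalIntegrable u volume a b :=
  intervalIntegrable_const.mono_fun' hu.aestronglyMeasurable
    (Eventually.of_forall fun x => (Real.norm_eq_abs _).trans_le (hC x))

theorem UT_sub_UT (xc a b : ℝ) : UT u xc b - UT u xc a = ∫ s in a..b, u s :=
  intervalIntegral.integral_interval_sub_left (intervalIntegrable_of_abs_le hu hC xc b)
    (intervalIntegrable_of_abs_le hu hC xc a)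

theorem hasSlopesIn_UT {A B : ℝ} (hA : ∀ x, A ≤ u x) (hB : ∀ x, u x ≤ B) (xc : ℝ) :
    HasSlopesIn (UT u xc) A B := fun x y hxy => by
  have hlow := intervalIntegral.integral_mono_on hxy intervalIntegrable_const
    (intervalIntegrable_of_abs_le hu hC x y) fun s _ => hA s
  have hupp := intervalIntegral.integral_mono_on hxy (intervalIntegrable_of_abs_le hu hC x y)
    intervalIntegrable_const fun s _ => hB s
  simp only [intervalIntegral.integral_const, smul_eq_mul] at hlow hupp
  rw [UT_sub_UT hu hC]
  constructor <;> linarith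

theorem hasDerivWithinAt_UT_Iic (xc : ℝ) {x : ℝ} (hlc : ContinuousWithinAt u (Iio x) x) :
    HasDerivWithinAt (UT u xc) (u x) (Iic x) x :=
  intervalIntegral.integral_hasDerivWithinAt_right (intervalIntegrable_of_abs_le hu hC xc x)
    hu.stronglyMeasurable.stronglyMeasurableAtFilter (continuousWithinAt_Iio_iff_Iic.1 hlc)

end UT

section Forward

variable {f : ℝ → ℝ} (hf : CondF f) {T : ℝ} (hT : 0 < T) {u : ℝ → ℝ} (hu : Measurable u)
  {C : ℝ} (hC : ∀ x, |u x| ≤ C) (xc : ℝ)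
include hf hT hu hC

theorem bddAbove_range_UT_sub_cost (x : ℝ) :
    BddAbove (range fun ξ => UT u xc ξ - T * legendre f ((ξ - x) / T)) := by
  have hUT : HasSlopesIn (UT u xc) (-C) C :=
    hasSlopesIn_UT hu hC (fun x => neg_le_of_abs_le (hC x)) (fun x => le_of_abs_le (hC x)) xc
  refine ⟨UT u xc x + T * max (f C) (f (-C)), forall_mem_range.2 fun ξ => ?_⟩
  have := hf.mul_abs_sub_le_cost hT C (ξ - x)
  linarith [hUT.sub_le_mul_abs x ξ]

theorem UT_sub_cost_le_Uflat (x ξ : ℝ) :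
    UT u xc ξ - T * legendre f ((ξ - x) / T) ≤ Uflat f T u xc x :=
  le_csSup (bddAbove_range_UT_sub_cost hf hT hu hC xc x) ⟨ξ, rfl⟩

/-- Translating the competitor `ξ` by `y - x` compares the suprema defining `U_o^♭(x)` and
`U_o^♭(y)`. -/
theorem hasSlopesIn_Uflat {A B : ℝ} (hA : ∀ x, A ≤ u x) (hB : ∀ x, u x ≤ B) :
    HasSlopesIn (Uflat f T u xc) A B := fun x y hxy => by
  have hUT := hasSlopesIn_UT hu hC hA hB xc
  constructor
  · suffices Uflat f T u xc x ≤ Uflat f T u xc y - A * (y - x) by linarith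
    refine csSup_le (range_nonempty _) (forall_mem_range.2 fun ξ => ?_)
    have := UT_sub_cost_le_Uflat hf hT hu hC xc y (ξ + (y - x))
    rw [show ξ + (y - x) - y = ξ - x by ring] at this
    linarith [(hUT (show ξ ≤ ξ + (y - x) by linarith)).1]
  · suffices Uflat f T u xc y ≤ Uflat f T u xc x + B * (y - x) by linarith
    refine csSup_le (range_nonempty _) (forall_mem_range.2 fun ξ => ?_)
    have := UT_sub_cost_le_Uflat hf hT hu hC xc x (ξ - (y - x))
    rw [show ξ - (y - x) - x = ξ - y by ring] at this
    linarith [(hUT (show ξ - (y - x) ≤ ξ by linarith)).2]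

/-- With `ξ = x - T f'(u x)`, condition (O) says exactly that the integrand `u - (f')⁻¹((· - ξ)/T)`
of `η ↦ U_T(η) - T f*((η - ξ)/T)` is nonnegative left of `x` and nonpositive right of `x`. -/
theorem UT_sub_cost_le_of_oleinik (hol : Oleinik f T u) (x η : ℝ) :
    UT u xc η - T * legendre f ((η - (x - T * deriv f (u x))) / T) ≤
      UT u xc x - T * legendre f ((x - (x - T * deriv f (u x))) / T) := by
  set ξ := x - T * deriv f (u x)
  set g := hf.derivIso.symm
  have hξ : ∀ s, (s - ξ) / T = deriv f (u x) + (s - x) / T := fun s => by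
    simp only [ξ]; field_simp; ring
  have hg : ∀ a b, IntervalIntegrable (fun s => g ((s - ξ) / T)) volume a b := fun a b =>
    (g.continuous.comp (by fun_prop)).intervalIntegrable a b
  refine le_of_sub_eq_integral (Φ := fun η => UT u xc η - T * legendre f ((η - ξ) / T))
    (φ := fun s => u s - g ((s - ξ) / T)) (x := x) (fun a b => ?_)
    (fun a b => (intervalIntegrable_of_abs_le hu hC a b).sub (hg a b)) (fun s hs => ?_)
    (fun s hs => ?_) η
  · rw [intervalIntegral.integral_sub (intervalIntegrable_of_abs_le hu hC a b) (hg a b),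
      hf.integral_derivIso_symm hT, ← UT_sub_UT hu hC]
    ring
  · have hol' : deriv f (u x) - deriv f (u s) ≤ (x - s) / T := by
      rcases hs.lt_or_eq with hs | rfl
      · simpa using hol s (x - s) (by linarith)
      · simp
    have : (s - ξ) / T ≤ deriv f (u s) := by
      rw [hξ, show (s - x) / T = -((x - s) / T) by ring]
      linarith
    simpa [g] using g.monotone this
  · have hol' : deriv f (u s) - deriv f (u x) ≤ (s - x) / T := by
      rcases hs.lt_or_eq with hs | rfl
      · simpa using hol x (s - x) (by linarith)
      · simp
    have : deriv f (u s) ≤ (s - ξ) / T := by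
      rw [hξ]
      linarith
    simpa [g] using g.monotone this

theorem hopfLax_Uflat (hol : Oleinik f T u) (x : ℝ) :
    HopfLax f T (Uflat f T u xc) x = UT u xc x := by
  set ξ := x - T * deriv f (u x)
  have hmin : Uflat f T u xc ξ ≤ UT u xc x - T * legendre f ((x - ξ) / T) :=
    csSup_le (range_nonempty _) (forall_mem_range.2
      (UT_sub_cost_le_of_oleinik hf hT hu hC xc hol x))
  have hlb : ∀ ξ', UT u xc x ≤ Uflat f T u xc ξ' + T * legendre f ((x - ξ') / T) :=
    fun ξ' => by linarith [UT_sub_cost_le_Uflat hf hT hu hC xc ξ' x]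
  refine IsLeast.csInf_eq ⟨⟨ξ, ?_⟩, forall_mem_range.2 hlb⟩
  linarith [hlb ξ]

end Forward

theorem LipschitzWith.exists_forall_add_le {V L : ℝ → ℝ} {K : NNReal} (hV : LipschitzWith K V)
    (hL : Continuous L) {M : ℝ} (hcoer : ∀ z, (K + 1) * |z| - M ≤ L z) (x : ℝ) :
    ∃ ξ, ∀ ξ', V ξ + L (x - ξ) ≤ V ξ' + L (x - ξ') := by
  refine (hV.continuous.add (hL.comp (by fun_prop))).exists_forall_le
    (tendsto_atTop_mono (fun ξ => ?_) (tendsto_atTop_add_const_left _ (V x - M)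
      (tendsto_dist_left_cocompact_atTop x)))
  show V x - M + dist x ξ ≤ V ξ + L (x - ξ)
  have hV' := hV.dist_le_mul x ξ
  rw [Real.dist_eq, Real.dist_eq] at hV'
  rw [Real.dist_eq]
  have := hcoer (x - ξ)
  linarith [le_abs_self (V x - V ξ)]

/-- Otherwise exchanging the two minimizers contradicts the strict convexity of `L`. -/
theorem StrictConvexOn.le_of_forall_add_le {V L : ℝ → ℝ} (hL : StrictConvexOn ℝ univ L)
    {x₁ x₂ ξ₁ ξ₂ : ℝ} (hx : x₁ < x₂) (h₁ : ∀ ξ, V ξ₁ + L (x₁ - ξ₁) ≤ V ξ + L (x₁ - ξ))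
    (h₂ : ∀ ξ, V ξ₂ + L (x₂ - ξ₂) ≤ V ξ + L (x₂ - ξ)) : ξ₁ ≤ ξ₂ := by
  by_contra! hξ
  have := hL.add_lt_add_of_lt (show x₁ - ξ₁ < x₁ - ξ₂ by linarith)
    (show x₁ - ξ₁ < x₂ - ξ₁ by linarith) (show x₁ - ξ₁ + (x₂ - ξ₂) = x₁ - ξ₂ + (x₂ - ξ₁) by ring)
  linarith [h₁ ξ₂, h₂ ξ₁]

theorem hopfLax_eq_of_forall_le {f Uo : ℝ → ℝ} {T x ξ : ℝ}
    (h : ∀ ξ', Uo ξ + T * legendre f ((x - ξ) / T) ≤ Uo ξ' + T * legendre f ((x - ξ') / T)) :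
    HopfLax f T Uo x = Uo ξ + T * legendre f ((x - ξ) / T) :=
  IsLeast.csInf_eq ⟨⟨ξ, rfl⟩, forall_mem_range.2 h⟩

section Backward

variable {f : ℝ → ℝ} (hf : CondF f) {T : ℝ} (hT : 0 < T) {Uo : ℝ → ℝ} {K : NNReal}
  (hUo : LipschitzWith K Uo)
include hf hT hUo

theorem exists_hopfLax_minimizer (x : ℝ) :
    ∃ ξ, ∀ ξ', Uo ξ + T * legendre f ((x - ξ) / T) ≤ Uo ξ' + T * legendre f ((x - ξ') / T) :=
  hUo.exists_forall_add_le (L := fun z => T * legendre f (z / T))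
    (continuous_iff_continuousAt.2 fun z => (hf.hasDerivAt_cost hT z).continuousAt)
    (hf.mul_abs_sub_le_cost hT (K + 1)) x

theorem hopfLax_le (x ξ : ℝ) : HopfLax f T Uo x ≤ Uo ξ + T * legendre f ((x - ξ) / T) := by
  obtain ⟨ξ₀, h⟩ := exists_hopfLax_minimizer hf hT hUo x
  exact (hopfLax_eq_of_forall_le h).trans_le (h ξ)

variable {u : ℝ → ℝ} (hu : Measurable u) {C : ℝ} (hC : ∀ x, |u x| ≤ C) {xc : ℝ}
  (hHL : ∀ x, HopfLax f T Uo x = UT u xc x)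
include hu hC hHL

/-- `x` minimizes `z ↦ Uo ξ + T f*((z - ξ)/T) - U_T(z)`, so its left derivative
`(f')⁻¹((x - ξ)/T) - u(x)` is nonpositive. -/
theorem div_le_deriv_of_UT_eq {x ξ : ℝ} (hlc : ContinuousWithinAt u (Iio x) x)
    (hξ : UT u xc x = Uo ξ + T * legendre f ((x - ξ) / T)) :
    (x - ξ) / T ≤ deriv f (u x) := by
  have hmin : IsMinOn (fun z => Uo ξ + T * legendre f ((z - ξ) / T) - UT u xc z) univ x :=
    isMinOn_univ_iff.2 fun z => by
      linarith [hopfLax_le hf hT hUo z ξ, hHL z]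
  have hd := (((hf.hasDerivAt_cost hT (x - ξ)).comp_sub_const x ξ).const_add (Uo ξ)
    |>.hasDerivWithinAt).sub (hasDerivWithinAt_UT_Iic hu hC xc hlc)
  have := (hmin.on_subset (subset_univ _)).localize.hasDerivWithinAt_Iic_nonpos hd
  simpa using hf.derivIso.monotone (show hf.derivIso.symm ((x - ξ) / T) ≤ u x by linarith)

/-- Comparing `U_T(y)` with `U_T(z)` for `z ∈ (x, y]` through a minimizer at `z`, which lies right
of `ξ`, bounds the left difference quotients of `U_T` at `y` by `(f')⁻¹((y - ξ)/T)`. -/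
theorem deriv_le_div_of_forall_le {x y ξ : ℝ} (hxy : x < y)
    (hlc : ContinuousWithinAt u (Iio y) y)
    (hξ : ∀ ξ', Uo ξ + T * legendre f ((x - ξ) / T) ≤ Uo ξ' + T * legendre f ((x - ξ') / T)) :
    deriv f (u y) ≤ (y - ξ) / T := by
  have hmin : IsLocalMinOn (fun z => UT u xc z - hf.derivIso.symm ((y - ξ) / T) * z) (Iic y) y := by
    filter_upwards [self_mem_nhdsWithin, mem_nhdsWithin_of_mem_nhds (Ioi_mem_nhds hxy)]
      with z (hzy : z ≤ y) (hxz : x < z)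
    obtain ⟨ξz, hξz⟩ := exists_hopfLax_minimizer hf hT hUo z
    have hy : UT u xc y ≤ Uo ξz + T * legendre f ((y - ξz) / T) :=
      hHL y ▸ hopfLax_le hf hT hUo y ξz
    have hz : UT u xc z = Uo ξz + T * legendre f ((z - ξz) / T) :=
      hHL z ▸ hopfLax_eq_of_forall_le hξz
    have hcost := hf.cost_sub_cost_le hT (z - ξz) (y - ξz)
    have hle : ξ ≤ ξz := (hf.strictConvexOn_cost hT).le_of_forall_add_le hxz hξ hξz
    have hmono := mul_le_mul_of_nonneg_left
      (hf.derivIso.symm.monotone (div_le_div_of_nonneg_right (by linarith : y - ξz ≤ y - ξ) hT.le))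
      (sub_nonneg.2 hzy)
    linarith
  have := hmin.hasDerivWithinAt_Iic_nonpos ((hasDerivWithinAt_UT_Iic hu hC xc hlc).sub
    ((hasDerivAt_id y).const_mul (hf.derivIso.symm ((y - ξ) / T))).hasDerivWithinAt)
  simp only [mul_one, sub_nonpos] at this
  simpa using hf.derivIso.monotone this

theorem oleinik_of_hopfLax_eq (hlc : LeftCts u) : Oleinik f T u := fun x Δ hΔ => by
  obtain ⟨ξ, hξ⟩ := exists_hopfLax_minimizer hf hT hUo x
  have hlow := div_le_deriv_of_UT_eq hf hT hUo hu hC hHL (hlc x)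
    ((hHL x).symm.trans (hopfLax_eq_of_forall_le hξ))
  have hupp := deriv_le_div_of_forall_le hf hT hUo hu hC hHL (by linarith) (hlc (x + Δ)) hξ
  linarith [show (x + Δ - ξ) / T - (x - ξ) / T = Δ / T by ring]

end Backward

theorem Set.OrdConnected.Icc_csInf_csSup_subset {J S : Set ℝ} (hJ : J.OrdConnected)
    (hJcl : IsClosed J) (hSJ : S ⊆ J) (hS : S.Nonempty) (hlow : BddBelow S) (hupp : BddAbove S) :
    Icc (sInf S) (sSup S) ⊆ J :=
  hJ.out (closure_minimal hSJ hJcl (csInf_mem_closure hS hlow))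
    (closure_minimal hSJ hJcl (csSup_mem_closure hS hupp))

theorem stmt_11_general (f : ℝ → ℝ) (hf : CondF f) (T : ℝ) (hT : 0 < T)
    (J : Set ℝ) (hJcl : IsClosed J) (hJoc : J.OrdConnected)
    (uT : ℝ → ℝ) (huT : Measurable uT) (C : ℝ) (hC : ∀ x, |uT x| ≤ C)
    (hlc : LeftCts uT) (huTJ : ∀ x, uT x ∈ J) (xc : ℝ) :
    Oleinik f T uT ↔
      ∃ Uo : ℝ → ℝ, (∃ K, LipschitzWith K Uo) ∧ (∀ᵐ x ∂volume, deriv Uo x ∈ J) ∧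
        ∀ x : ℝ, HopfLax f T Uo x = UT uT xc x := by
  constructor
  · intro hol
    have hlow : BddBelow (range uT) := ⟨-C, forall_mem_range.2 fun x => neg_le_of_abs_le (hC x)⟩
    have hupp : BddAbove (range uT) := ⟨C, forall_mem_range.2 fun x => le_of_abs_le (hC x)⟩
    have hlip := (hasSlopesIn_Uflat hf hT huT hC xc (fun x => neg_le_of_abs_le (hC x))
      fun x => le_of_abs_le (hC x)).lipschitzWith
    have hslopes := hasSlopesIn_Uflat hf hT huT hC xc (fun x => csInf_le hlow ⟨x, rfl⟩)
      fun x => le_csSup hupp ⟨x, rfl⟩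
    refine ⟨Uflat f T uT xc, ⟨_, hlip⟩, ?_, hopfLax_Uflat hf hT huT hC xc hol⟩
    filter_upwards [hlip.ae_differentiableAt] with x hx
    exact hJoc.Icc_csInf_csSup_subset hJcl (range_subset_iff.2 huTJ) (range_nonempty _) hlow hupp
      (hslopes.deriv_mem_Icc hx)
  · rintro ⟨Uo, ⟨K, hUo⟩, -, hHL⟩
    exact oleinik_of_hopfLax_eq hf hT hUo huT hC hHL hlc

theorem stmt_11 (f : ℝ → ℝ) (hf : CondF f) (T : ℝ) (hT : 0 < T)
    (J : Set ℝ) (hJne : J.Nonempty) (hJcl : IsClosed J) (hJoc : J.OrdConnected)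
    (uT : ℝ → ℝ) (huT : Measurable uT) (C : ℝ) (hC : ∀ x, |uT x| ≤ C)
    (hlc : LeftCts uT) (huTJ : ∀ x, uT x ∈ J) (xc : ℝ) :
    Oleinik f T uT ↔
      ∃ Uo : ℝ → ℝ, (∃ K, LipschitzWith K Uo) ∧ (∀ᵐ x ∂volume, deriv Uo x ∈ J) ∧
        ∀ x : ℝ, HopfLax f T Uo x = UT uT xc x :=
  stmt_11_general f hf T hT J hJcl hJoc uT huT C hC hlc huTJ xc
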